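/- Let g be a 3-Lie algebra and N a Nijenhuis operator. Then for any j, k ≥ 1: N^j[x₁,x₂,x₃]_{N^k} + N^k[x₁,x₂,x₃]_{N^j} = [N^k x₁,N^j x₂,x₃]+[N^k x₁,x₂,N^j x₃]+[x₁,N^k x₂,N^j x₃]+[N^j x₁,N^k x₂,x₃]+[N^j x₁,x₂,N^k x₃]+[x₁,N^j x₂,N^k x₃]. -/
import Mathlib

def deform {K : Type*} [Field K] {g : Type*} [AddCommGroup g] [Module K g]
    (M : Module.End K g) (μ : g → g → g → g) : g → g → g → g :=
  fun x y z => μ (M x) y z + μ x (M y) z + μ x y (M z) - M (μ x y z)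

def IsNijenhuis {K : Type*} [Field K] {g : Type*} [AddCommGroup g] [Module K g]
    (b : g →ₗ[K] g →ₗ[K] g →ₗ[K] g) (N : Module.End K g) : Prop :=
  (∀ x y z, N (deform N (fun u v w => b u v w) x y z)
      = b (N x) (N y) z + b (N x) y (N z) + b x (N y) (N z))
  ∧ (∀ x y z, b (N x) (N y) (N z) = 0)

namespace ThreeLieNijAux

variable {K : Type*} [Field K] {g : Type*} [AddCommGroup g] [Module K g]
variable (b : g →ₗ[K] g →ₗ[K] g →ₗ[K] g) (N : Module.End K g)

/-- `Q a x y z = b(Nᵃx,y,z)+b(x,Nᵃy,z)+b(x,y,Nᵃz)`. -/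
def Q (a : ℕ) (x y z : g) : g :=
  b ((N ^ a) x) y z + b x ((N ^ a) y) z + b x y ((N ^ a) z)

/-- `Hm a c x y z = b(Nᵃx,N^c y,z)+b(Nᵃx,y,N^c z)+b(x,Nᵃy,N^c z)`. -/
def Hm (a c : ℕ) (x y z : g) : g :=
  b ((N ^ a) x) ((N ^ c) y) z + b ((N ^ a) x) y ((N ^ c) z) + b x ((N ^ a) y) ((N ^ c) z)

lemma pow_succ_apply (n : ℕ) (v : g) : (N ^ (n + 1)) v = N ((N ^ n) v) := by
  rw [pow_succ']; rfl

lemma C1 (hN : IsNijenhuis b N) (u v w : g) :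
    N (b (N u) v w) + N (b u (N v) w) + N (b u v (N w)) - N (N (b u v w))
      = b (N u) (N v) w + b (N u) v (N w) + b u (N v) (N w) := by
  have h := hN.1 u v w
  simp only [deform, map_add, map_sub] at h
  exact h

/-- star: for `a ≥ 1`,
`N Q(a+1) + N(Hm a 1 + Hm 1 a) - N² Q a = Hm (a+1) 1 + Hm 1 (a+1)`. -/
lemma star (hN : IsNijenhuis b N) (a : ℕ) (ha : 1 ≤ a) (x y z : g) :
    N (Q b N (a+1) x y z) + N (Hm b N a 1 x y z + Hm b N 1 a x y z)
        - N (N (Q b N a x y z))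
      = Hm b N (a+1) 1 x y z + Hm b N 1 (a+1) x y z := by
  obtain ⟨a, rfl⟩ : ∃ a', a = a' + 1 := ⟨a - 1, by omega⟩
  have h1 := C1 b N hN ((N ^ (a+1)) x) y z
  have h2 := C1 b N hN x ((N ^ (a+1)) y) z
  have h3 := C1 b N hN x y ((N ^ (a+1)) z)
  simp only [Q, Hm, pow_one, pow_succ_apply, map_add, map_sub, hN.2, map_zero,
    add_zero, zero_add] at h1 h2 h3 ⊢
  linear_combination (norm := abel1) h1 + h2 + h3

/-- starstar: for `a, c ≥ 1`,
`Hm (a+1) (c+1) = N (Hm (a+1) c) + N (Hm a (c+1)) - N² (Hm a c)`. -/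
lemma starstar (hN : IsNijenhuis b N) (a c : ℕ) (ha : 1 ≤ a) (hc : 1 ≤ c) (x y z : g) :
    Hm b N (a+1) (c+1) x y z
      = N (Hm b N (a+1) c x y z) + N (Hm b N a (c+1) x y z)
          - N (N (Hm b N a c x y z)) := by
  obtain ⟨a, rfl⟩ : ∃ a', a = a' + 1 := ⟨a - 1, by omega⟩
  obtain ⟨c, rfl⟩ : ∃ c', c = c' + 1 := ⟨c - 1, by omega⟩
  have h1 := C1 b N hN ((N ^ (a+1)) x) ((N ^ (c+1)) y) z
  have h2 := C1 b N hN ((N ^ (a+1)) x) y ((N ^ (c+1)) z)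
  have h3 := C1 b N hN x ((N ^ (a+1)) y) ((N ^ (c+1)) z)
  simp only [Hm, pow_succ_apply, map_add, map_sub, hN.2, map_zero,
    add_zero, zero_add, sub_zero] at h1 h2 h3 ⊢
  linear_combination (norm := abel1) -h1 - h2 - h3

/-- the boundary case `j = 1`. -/
lemma G1 (hN : IsNijenhuis b N) (k : ℕ) (hk : 1 ≤ k) (x y z : g) :
    N (Q b N k x y z) + (N ^ k) (Q b N 1 x y z)
        - (N ^ (k + 1)) (b x y z) - (N ^ (k + 1)) (b x y z)
      = Hm b N k 1 x y z + Hm b N 1 k x y z := by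
  induction k, hk using Nat.le_induction with
  | base =>
      have h := C1 b N hN x y z
      simp only [Q, Hm, pow_one, pow_succ_apply, map_add, map_sub] at *
      linear_combination (norm := abel1) h + h
  | succ k hk ih =>
      have hs := star b N hN k hk x y z
      have ih' := congrArg N ih
      simp only [map_add, map_sub, pow_succ_apply] at ih' hs ⊢
      linear_combination (norm := abel1) hs + ih'

lemma main (hN : IsNijenhuis b N) (j : ℕ) (hj : 1 ≤ j) :
    ∀ k, 1 ≤ k → ∀ x y z : g,
      (N ^ j) (Q b N k x y z) + (N ^ k) (Q b N j x y z)
          - (N ^ (j + k)) (b x y z) - (N ^ (j + k)) (b x y z)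
        = Hm b N k j x y z + Hm b N j k x y z := by
  induction j, hj using Nat.le_induction with
  | base =>
      intro k hk x y z
      have := G1 b N hN k hk x y z
      rw [show 1 + k = k + 1 from by omega, pow_one] at *
      linear_combination (norm := abel1) this
  | succ j hj ihj =>
      intro k hk
      induction k, hk using Nat.le_induction with
      | base =>
          intro x y z
          have := G1 b N hN (j+1) (by omega) x y z
          rw [show j + 1 + 1 = (j + 1) + 1 from rfl, pow_one] at *
          linear_combination (norm := abel1) this
      | succ k hk ihk =>
          intro x y z
          have s1 := starstar b N hN j k hj hk x y z
          have s2 := starstar b N hN k j hk hj x y z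
          have h1 := congrArg N (ihk x y z)
          have h2 := congrArg N (ihj (k+1) (by omega) x y z)
          have h3 := congrArg N (congrArg N (ihj k hk x y z))
          rw [show j + 1 + k = j + k + 1 from by omega] at h1
          rw [show j + (k + 1) = j + k + 1 from by omega] at h2
          rw [show j + 1 + (k + 1) = j + k + 1 + 1 from by omega]
          simp only [map_add, map_sub, pow_succ_apply] at h1 h2 h3 s1 s2 ⊢
          linear_combination (norm := abel1) h1 + h2 - h3 - s1 - s2

end ThreeLieNijAux

/-- Lemma 4.7: for a Nijenhuis operator `N` and `j, k ≥ 1`,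
`N^j[x₁,x₂,x₃]_{N^k} + N^k[x₁,x₂,x₃]_{N^j}` equals the six-term right-hand side. -/
theorem threeLie_nijenhuis_powers_identity
    {K : Type*} [Field K] {g : Type*} [AddCommGroup g] [Module K g]
    (b : g →ₗ[K] g →ₗ[K] g →ₗ[K] g)
    (hb1 : ∀ x y z, b x y z = - b y x z)
    (hb2 : ∀ x y z, b x y z = - b x z y)
    (hfi : ∀ x₁ x₂ y₁ y₂ y₃, b x₁ x₂ (b y₁ y₂ y₃)
      = b (b x₁ x₂ y₁) y₂ y₃ + b y₁ (b x₁ x₂ y₂) y₃ + b y₁ y₂ (b x₁ x₂ y₃))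
    (N : Module.End K g) (hN : IsNijenhuis b N) :
    ∀ (j k : ℕ), 1 ≤ j → 1 ≤ k → ∀ x₁ x₂ x₃ : g,
      (N ^ j) (deform (N ^ k) (fun u v w => b u v w) x₁ x₂ x₃)
        + (N ^ k) (deform (N ^ j) (fun u v w => b u v w) x₁ x₂ x₃)
      = b ((N ^ k) x₁) ((N ^ j) x₂) x₃ + b ((N ^ k) x₁) x₂ ((N ^ j) x₃)
          + b x₁ ((N ^ k) x₂) ((N ^ j) x₃)
        + b ((N ^ j) x₁) ((N ^ k) x₂) x₃ + b ((N ^ j) x₁) x₂ ((N ^ k) x₃)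
          + b x₁ ((N ^ j) x₂) ((N ^ k) x₃) := by
  intro j k hj hk x y z
  have M := ThreeLieNijAux.main b N hN j hj k hk x y z
  have comp1 : (N ^ j) ((N ^ k) (b x y z)) = (N ^ (j + k)) (b x y z) := by
    rw [pow_add]; rfl
  have comp2 : (N ^ k) ((N ^ j) (b x y z)) = (N ^ (j + k)) (b x y z) := by
    rw [add_comm, pow_add]; rfl
  simp only [ThreeLieNijAux.Q, ThreeLieNijAux.Hm, map_add, map_sub] at M
  simp only [deform, map_add, map_sub, comp1, comp2]
  linear_combination (norm := abel1) M
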